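/- Discrete transfer formula: Let d ≥ 1 and let G¹, G² ∈ (ℝ^d)^{N+1} with G²_N = 0. Define S ∈ ℝ^{N+1} by S_i = ∑_{r=1}^{N} ∑_{j=0}^{N−r+1} (A_r)_{i,j} (G¹_j · G²_{j+r−1}) for i = 0,…,N (every nonzero entry (A_r)_{i,j} has j + r − 1 ≤ N, so all indices are well defined; for r = 1 the inner sum runs over j = 0,…,N). Then for every k = 1,…,N: G¹_k · (Δ^α_+ G²)_{k−1} − (ᶜΔ^α_− G¹)_k · G²_{k−1} = h^{1−α} (S_k − S_{k−1})/h. -/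

import Mathlib

open Finset Filter
open scoped RealInnerProductSpace Topology

noncomputable section

/-- `ℝ^n` with the euclidean norm. -/
abbrev Euc (n : ℕ) : Type := EuclideanSpace ℝ (Fin n)

/-- The Grünwald–Letnikov coefficients `α_r = (−α)(1−α)⋯(r−1−α)/r!`, with `α_0 = 1`. -/
def glCoef (α : ℝ) (r : ℕ) : ℝ :=
  (∏ i ∈ Finset.range r, ((i : ℝ) - α)) / (Nat.factorial r : ℝ)

/-- Left discrete fractional derivative `(Δ^α_− G)_k = h^{−α} ∑_{r=0}^{k} α_r G_{k−r}`. -/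
def dMinus {n : ℕ} (α h : ℝ) (G : ℕ → Euc n) (k : ℕ) : Euc n :=
  (h ^ (-α)) • ∑ r ∈ Finset.range (k + 1), glCoef α r • G (k - r)

/-- Right discrete fractional derivative `(Δ^α_+ G)_k = h^{−α} ∑_{r=0}^{N−k} α_r G_{k+r}`. -/
def dPlus {n : ℕ} (N : ℕ) (α h : ℝ) (G : ℕ → Euc n) (k : ℕ) : Euc n :=
  (h ^ (-α)) • ∑ r ∈ Finset.range (N - k + 1), glCoef α r • G (k + r)

/-- Left Caputo discrete fractional derivative `(ᶜΔ^α_− G)_k = h^{−α} ∑_{r=0}^{k} α_r (G_{k−r} − G_0)`. -/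
def cdMinus {n : ℕ} (α h : ℝ) (G : ℕ → Euc n) (k : ℕ) : Euc n :=
  dMinus α h (fun j => G j - G 0) k

/-- Right Caputo discrete fractional derivative
`(ᶜΔ^α_+ G)_k = h^{−α} ∑_{r=0}^{N−k} α_r (G_{k+r} − G_N)`. -/
def cdPlus {n : ℕ} (N : ℕ) (α h : ℝ) (G : ℕ → Euc n) (k : ℕ) : Euc n :=
  dPlus N α h (fun j => G j - G N) k

/-- `β^α_r = ∑_{k=0}^{r} α_k`. -/
def betaCoef (α : ℝ) (r : ℕ) : ℝ := ∑ k ∈ Finset.range (r + 1), glCoef α k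

/-- The matrix `B_r` (with indices `0,…,N`): `B_1 = Id` and, for `2 ≤ r ≤ N`,
`(B_r)_{i,j} = [1≤i≤N−1]·[1≤j≤N−r]·[0≤i−j≤r−1] − [j=0]·[r≤i]`. -/
def Bmat (N r i j : ℕ) : ℝ :=
  if r = 1 then (if i = j then 1 else 0)
  else
    (if (1 ≤ i ∧ i + 1 ≤ N) ∧ (1 ≤ j ∧ j + r ≤ N) ∧ (j ≤ i ∧ i < j + r) then 1 else 0)
      - (if j = 0 ∧ r ≤ i then 1 else 0)

/-- The matrix `C_r`: `(C_r)_{i,j} = [r≤i]·[j=0]`. -/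
def Cmat (r i j : ℕ) : ℝ := if r ≤ i ∧ j = 0 then 1 else 0

/-- The matrix `A_r = α_r B_r + β^α_r C_r`. -/
def Amat (α : ℝ) (N r i j : ℕ) : ℝ := glCoef α r * Bmat N r i j + betaCoef α r * Cmat r i j

/-- `S_i = ∑_{r=1}^{N} ∑_{j=0}^{N−r+1} (A_r)_{i,j} (G¹_j · G²_{j+r−1})`. -/
def transferS {n : ℕ} (N : ℕ) (α : ℝ) (G1 G2 : ℕ → Euc n) (i : ℕ) : ℝ :=
  ∑ r ∈ Finset.Icc 1 N, ∑ j ∈ Finset.range (N - r + 2),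
    Amat α N r i j * ⟪G1 j, G2 (j + r - 1)⟫

/-!
Both sides are `h^{-α}` times a bilinear expression in the pairs `⟪G¹_j, G²_m⟫`, since
`h^{1-α} / h = h^{-α}`. Row `k` minus row `k - 1` of each `A_r` has at most three nonzero
entries, in columns `k`, `k - r` and `0`: they produce the `r`-th term of `Δ^α_+ G²` at `k - 1`,
the `r`-th term of `Δ^α_- G¹` at `k`, and the correction `β^α_k - α_k` coming from subtracting
`G¹_0` in the Caputo derivative. The term of `Δ^α_+ G²` with no counterpart in `S` pairs with
`G²_N = 0`.
-/

lemma Finset.sum_range_succ_eq_add_sum_Icc {M : Type*} [AddCommMonoid M] (f : ℕ → M) (n : ℕ) :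
    ∑ r ∈ range (n + 1), f r = f 0 + ∑ r ∈ Icc 1 n, f r := by
  rw [range_eq_Ico, sum_eq_sum_Ico_succ_bot n.succ_pos, zero_add, Nat.succ_eq_add_one,
    Ico_add_one_right_eq_Icc]

lemma glCoef_zero (α : ℝ) : glCoef α 0 = 1 := by simp [glCoef]

lemma Amat_sub_Amat_pred (α : ℝ) {N r k : ℕ} (hr : 1 ≤ r) (hk : 1 ≤ k) (hkN : k ≤ N) (j : ℕ) :
    Amat α N r k j - Amat α N r (k - 1) j =
      (if j = k ∧ (r = 1 ∨ k + r ≤ N) then glCoef α r else 0)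
        - (if 1 ≤ j ∧ j + r = k then glCoef α r else 0)
        + (if j = 0 ∧ r = k then betaCoef α r - glCoef α r else 0) := by
  simp only [Amat, Bmat, Cmat]
  split_ifs <;> first | (exfalso; omega) | ring

lemma sum_Amat_sub_Amat_pred_mul (α : ℝ) {N r k : ℕ} (hr : 1 ≤ r) (hk : 1 ≤ k) (hkN : k ≤ N)
    (f : ℕ → ℝ) :
    ∑ j ∈ range (N - r + 2), (Amat α N r k j - Amat α N r (k - 1) j) * f j =
      (if r = 1 ∨ k + r ≤ N then glCoef α r * f k else 0)
        - (if r < k then glCoef α r * f (k - r) else 0)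
        + (if r = k then (betaCoef α k - glCoef α k) * f 0 else 0) := by
  simp only [Amat_sub_Amat_pred α hr hk hkN, add_mul, sub_mul, sum_add_distrib, sum_sub_distrib,
    ite_mul, zero_mul, ite_and]
  have hshift : ∀ x, (if 1 ≤ x then if x + r = k then glCoef α r * f x else 0 else 0) =
      if x = k - r then (if r < k then glCoef α r * f (k - r) else 0) else 0 := by
    intro x
    split_ifs <;> first | (exfalso; omega) | rfl | rw [show k - r = x by omega]
  simp only [hshift, sum_ite_eq', mem_range]
  split_ifs <;> first | (exfalso; omega) | (subst_vars; ring)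

lemma transferS_sub_transferS_pred {n N k : ℕ} (α : ℝ) (G1 G2 : ℕ → Euc n) (hG2 : G2 N = 0)
    (hk : 1 ≤ k) (hkN : k ≤ N) :
    transferS N α G1 G2 k - transferS N α G1 G2 (k - 1) =
      ∑ r ∈ Icc 1 (N - k + 1), glCoef α r * ⟪G1 k, G2 (k - 1 + r)⟫
        - ∑ r ∈ Icc 1 (k - 1), glCoef α r * ⟪G1 (k - r), G2 (k - 1)⟫
        + (betaCoef α k - glCoef α k) * ⟪G1 0, G2 (k - 1)⟫ := by
  simp only [transferS, ← sum_sub_distrib, ← sub_mul]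
  rw [sum_congr rfl fun r hr => sum_Amat_sub_Amat_pred_mul α (mem_Icc.1 hr).1 hk hkN _]
  simp only [sum_add_distrib, sum_sub_distrib, sum_ite_eq', ← sum_filter]
  have hright : ∑ r ∈ Icc 1 N with r = 1 ∨ k + r ≤ N, glCoef α r * ⟪G1 k, G2 (k + r - 1)⟫ =
      ∑ r ∈ Icc 1 (N - k + 1), glCoef α r * ⟪G1 k, G2 (k - 1 + r)⟫ := by
    refine sum_subset_zero_on_sdiff ?_ ?_ ?_
    · intro r
      simp only [mem_filter, mem_Icc]
      omega
    · intro r hr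
      simp only [Finset.mem_sdiff, mem_filter, mem_Icc] at hr
      rw [show k - 1 + r = N by omega, hG2, inner_zero_right, mul_zero]
    · intro r _
      rw [show k + r - 1 = k - 1 + r by omega]
  have hleft : ∑ r ∈ Icc 1 N with r < k, glCoef α r * ⟪G1 (k - r), G2 (k - r + r - 1)⟫ =
      ∑ r ∈ Icc 1 (k - 1), glCoef α r * ⟪G1 (k - r), G2 (k - 1)⟫ := by
    have hset : {r ∈ Icc 1 N | r < k} = Icc 1 (k - 1) := by
      ext r
      simp only [mem_filter, mem_Icc]
      omega
    rw [hset]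
    refine sum_congr rfl fun r hr => ?_
    rw [show k - r + r - 1 = k - 1 by have := mem_Icc.1 hr; omega]
  rw [hright, hleft, if_pos (mem_Icc.2 ⟨hk, hkN⟩), zero_add]

lemma inner_dPlus {n : ℕ} (N : ℕ) (α h : ℝ) (x : Euc n) (G : ℕ → Euc n) (m : ℕ) :
    ⟪x, dPlus N α h G m⟫ = h ^ (-α) * ∑ r ∈ range (N - m + 1), glCoef α r * ⟪x, G (m + r)⟫ := by
  simp only [dPlus, real_inner_smul_right, inner_sum]

lemma cdMinus_inner {n : ℕ} (α h : ℝ) (G : ℕ → Euc n) (k : ℕ) (y : Euc n) :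
    ⟪cdMinus α h G k, y⟫ = h ^ (-α) *
      (∑ r ∈ range (k + 1), glCoef α r * ⟪G (k - r), y⟫ - betaCoef α k * ⟪G 0, y⟫) := by
  simp only [cdMinus, dMinus, real_inner_smul_left, sum_inner, inner_sub_left, mul_sub,
    sum_sub_distrib, betaCoef, sum_mul]

lemma inner_dPlus_sub_cdMinus_inner {n N k : ℕ} (α h : ℝ) (G1 G2 : ℕ → Euc n) (hG2 : G2 N = 0)
    (hk : 1 ≤ k) (hkN : k ≤ N) :
    ⟪G1 k, dPlus N α h G2 (k - 1)⟫ - ⟪cdMinus α h G1 k, G2 (k - 1)⟫ =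
      h ^ (-α) * (transferS N α G1 G2 k - transferS N α G1 G2 (k - 1)) := by
  obtain ⟨m, rfl⟩ : ∃ m, k = m + 1 := ⟨k - 1, by omega⟩
  rw [inner_dPlus, cdMinus_inner, ← mul_sub, transferS_sub_transferS_pred α G1 G2 hG2 hk hkN,
    show N - (m + 1 - 1) + 1 = N - (m + 1) + 1 + 1 by omega, sum_range_succ_eq_add_sum_Icc,
    sum_range_succ, sum_range_succ_eq_add_sum_Icc]
  simp only [glCoef_zero, Nat.add_sub_cancel, Nat.sub_self, Nat.sub_zero, add_zero, one_mul]
  ring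

theorem discrete_transfer_formula_general
    (d N : ℕ)
    (a b : ℝ) (hab : a < b) (α : ℝ)
    (G1 G2 : ℕ → Euc d) (hG2 : G2 N = 0) :
    ∀ k, 1 ≤ k → k ≤ N →
      ⟪G1 k, dPlus N α ((b - a) / (N : ℝ)) G2 (k - 1)⟫
        - ⟪cdMinus α ((b - a) / (N : ℝ)) G1 k, G2 (k - 1)⟫
      = ((b - a) / (N : ℝ)) ^ ((1 : ℝ) - α) *
          ((transferS N α G1 G2 k - transferS N α G1 G2 (k - 1)) / ((b - a) / (N : ℝ))) := by
  intro k hk hkN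
  have hh : (b - a) / (N : ℝ) ≠ 0 :=
    div_ne_zero (sub_ne_zero.2 hab.ne') (Nat.cast_ne_zero.2 (by omega))
  rw [inner_dPlus_sub_cdMinus_inner α _ G1 G2 hG2 hk hkN,
    ← sub_sub_cancel_left 1 α, Real.rpow_sub_one hh]
  ring

/-- **Discrete transfer formula.** -/
theorem discrete_transfer_formula
    (d N : ℕ) (hd : 1 ≤ d) (hN : 1 ≤ N)
    (a b : ℝ) (hab : a < b) (α : ℝ) (hα : 0 < α) (hα1 : α ≤ 1)
    (G1 G2 : ℕ → Euc d) (hG2 : G2 N = 0) :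
    ∀ k, 1 ≤ k → k ≤ N →
      ⟪G1 k, dPlus N α ((b - a) / (N : ℝ)) G2 (k - 1)⟫
        - ⟪cdMinus α ((b - a) / (N : ℝ)) G1 k, G2 (k - 1)⟫
      = ((b - a) / (N : ℝ)) ^ ((1 : ℝ) - α) *
          ((transferS N α G1 G2 k - transferS N α G1 G2 (k - 1)) / ((b - a) / (N : ℝ))) :=
  discrete_transfer_formula_general d N a b hab α G1 G2 hG2
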